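/- arXiv:2010.04349 — 4 statements merged into one kernel-verified Lean document; each statement's English description precedes it below -/
import Mathlib

section
/- Let Q be a symmetric bilinear form on n×n real matrices such that (1-δ)‖K‖_F² ≤ Q(K,K) ≤ (1+δ)‖K‖_F² for all matrices K of rank at most 2r. Then for all matrices K, L of rank at most r, |Q(K,L) - ⟨K,L⟩| ≤ δ‖K‖_F‖L‖_F. -/
noncomputable def frob {m n : Type*} [Fintype m] [Fintype n] (A : Matrix m n ℝ) : ℝ :=
  Real.sqrt (∑ i, ∑ j, (A i j)^2)

def finner {m n : Type*} [Fintype m] [Fintype n] (A B : Matrix m n ℝ) : ℝ :=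
  ∑ i, ∑ j, A i j * B i j

lemma frob_sq {m n : Type*} [Fintype m] [Fintype n] (A : Matrix m n ℝ) :
    frob A ^ 2 = finner A A := by
  have h : (0:ℝ) ≤ ∑ i, ∑ j, (A i j)^2 := by positivity
  rw [frob, Real.sq_sqrt h, finner]
  exact Finset.sum_congr rfl fun i _ => Finset.sum_congr rfl fun j _ => sq (A i j)

lemma finner_add_self {m n : Type*} [Fintype m] [Fintype n] (A B : Matrix m n ℝ) :
    finner (A + B) (A + B) = finner A A + 2 * finner A B + finner B B := by
  simp only [finner, Matrix.add_apply, Finset.mul_sum, ← Finset.sum_add_distrib]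
  exact Finset.sum_congr rfl fun i _ => Finset.sum_congr rfl fun j _ => by ring

lemma finner_sub_self {m n : Type*} [Fintype m] [Fintype n] (A B : Matrix m n ℝ) :
    finner (A - B) (A - B) = finner A A - 2 * finner A B + finner B B := by
  simp only [finner, Matrix.sub_apply, Finset.mul_sum, ← Finset.sum_sub_distrib,
    ← Finset.sum_add_distrib]
  exact Finset.sum_congr rfl fun i _ => Finset.sum_congr rfl fun j _ => by ring

lemma finner_smul_smul {m n : Type*} [Fintype m] [Fintype n] (c d : ℝ) (A B : Matrix m n ℝ) :
    finner (c • A) (d • B) = (c * d) * finner A B := by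
  simp only [finner, Matrix.smul_apply, smul_eq_mul, Finset.mul_sum]
  refine Finset.sum_congr rfl fun i _ => Finset.sum_congr rfl fun j _ => by ring

lemma rank_add_le' {n : ℕ} (A B : Matrix (Fin n) (Fin n) ℝ) :
    (A + B).rank ≤ A.rank + B.rank := by
  unfold Matrix.rank
  rw [Matrix.mulVecLin_add]
  have hle : LinearMap.range (A.mulVecLin + B.mulVecLin) ≤
      LinearMap.range A.mulVecLin ⊔ LinearMap.range B.mulVecLin := by
    rintro x ⟨y, rfl⟩
    exact Submodule.add_mem_sup ⟨y, rfl⟩ ⟨y, rfl⟩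
  exact (Submodule.finrank_mono hle).trans
    (Submodule.finrank_add_le_finrank_add_finrank _ _)

lemma rank_smul_le' {n : ℕ} (c : ℝ) (A : Matrix (Fin n) (Fin n) ℝ) :
    (c • A).rank ≤ A.rank := by
  have h : c • A = (c • (1 : Matrix (Fin n) (Fin n) ℝ)) * A := by
    rw [Matrix.smul_mul, one_mul]
  rw [h]
  exact Matrix.rank_mul_le_right _ _

lemma frob_eq_zero {m n : Type*} [Fintype m] [Fintype n] {A : Matrix m n ℝ}
    (h : frob A = 0) : A = 0 := by
  have hnn : (0:ℝ) ≤ ∑ i, ∑ j, (A i j)^2 := by positivity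
  have h2 : ∑ i, ∑ j, (A i j)^2 = 0 :=
    le_antisymm (Real.sqrt_eq_zero'.mp h) hnn
  ext i j
  have hi := (Finset.sum_eq_zero_iff_of_nonneg (fun i _ => by positivity)).mp h2 i (Finset.mem_univ i)
  have hj := (Finset.sum_eq_zero_iff_of_nonneg (fun j _ => by positivity)).mp hi j (Finset.mem_univ j)
  simpa using pow_eq_zero_iff (n := 2) (by norm_num) |>.mp hj

theorem stmt_0 {n r : ℕ} (δ : ℝ) (hδ0 : 0 ≤ δ) (hδ1 : δ < 1)
    (Q : Matrix (Fin n) (Fin n) ℝ →ₗ[ℝ] Matrix (Fin n) (Fin n) ℝ →ₗ[ℝ] ℝ)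
    (hsym : ∀ K L, Q K L = Q L K)
    (hRIP : ∀ K : Matrix (Fin n) (Fin n) ℝ, K.rank ≤ 2 * r →
      (1 - δ) * frob K ^ 2 ≤ Q K K ∧ Q K K ≤ (1 + δ) * frob K ^ 2)
    (K L : Matrix (Fin n) (Fin n) ℝ) (hK : K.rank ≤ r) (hL : L.rank ≤ r) :
    |Q K L - finner K L| ≤ δ * frob K * frob L := by
  -- key polarization bound
  have key : ∀ A B : Matrix (Fin n) (Fin n) ℝ, A.rank ≤ r → B.rank ≤ r →
      |Q A B - finner A B| ≤ δ / 2 * (finner A A + finner B B) := by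
    intro A B hA hB
    have hr1 : (A + B).rank ≤ 2 * r :=
      (rank_add_le' A B).trans (by omega)
    have hr2 : (A - B).rank ≤ 2 * r := by
      have : A - B = A + (-1 : ℝ) • B := by ext i j; simp [sub_eq_add_neg]
      rw [this]
      exact ((rank_add_le' A _).trans
        (by have := rank_smul_le' (-1 : ℝ) B; omega))
    obtain ⟨h1, h2⟩ := hRIP (A + B) hr1
    obtain ⟨h3, h4⟩ := hRIP (A - B) hr2
    rw [frob_sq] at h1 h2 h3 h4
    have hQ1 : Q (A + B) (A + B) = Q A A + 2 * Q A B + Q B B := by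
      simp only [map_add, LinearMap.add_apply]
      rw [hsym B A]; ring
    have hQ2 : Q (A - B) (A - B) = Q A A - 2 * Q A B + Q B B := by
      simp only [map_sub, LinearMap.sub_apply]
      rw [hsym B A]; ring
    have hf1 := finner_add_self A B
    have hf2 := finner_sub_self A B
    rw [abs_le]
    constructor <;> nlinarith [h1, h2, h3, h4]
  have hKnn : (0:ℝ) ≤ frob K := Real.sqrt_nonneg _
  have hLnn : (0:ℝ) ≤ frob L := Real.sqrt_nonneg _
  rcases eq_or_lt_of_le hKnn with ha | ha
  · have hK0 : K = 0 := frob_eq_zero ha.symm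
    subst hK0
    simp only [map_zero, LinearMap.zero_apply]
    have : finner (0 : Matrix (Fin n) (Fin n) ℝ) L = 0 := by simp [finner]
    rw [this]
    simp only [sub_zero, abs_zero]
    positivity
  rcases eq_or_lt_of_le hLnn with hb | hb
  · have hL0 : L = 0 := frob_eq_zero hb.symm
    subst hL0
    simp only [map_zero]
    have : finner K (0 : Matrix (Fin n) (Fin n) ℝ) = 0 := by simp [finner]
    rw [this]
    simp only [sub_zero, abs_zero]
    positivity
  set a := frob K with ha'
  set b := frob L with hb'
  set c := Real.sqrt (b / a) with hc
  set d := Real.sqrt (a / b) with hd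
  have ha0 : a ≠ 0 := ne_of_gt ha
  have hb0 : b ≠ 0 := ne_of_gt hb
  have hcd : c * d = 1 := by
    rw [hc, hd, ← Real.sqrt_mul (by positivity)]
    rw [show b / a * (a / b) = 1 by field_simp]
    exact Real.sqrt_one
  have hc2 : c ^ 2 = b / a := Real.sq_sqrt (by positivity)
  have hd2 : d ^ 2 = a / b := Real.sq_sqrt (by positivity)
  have hKr : (c • K).rank ≤ r := (rank_smul_le' c K).trans hK
  have hLr : (d • L).rank ≤ r := (rank_smul_le' d L).trans hL
  have hbd := key (c • K) (d • L) hKr hLr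
  have hQs : Q (c • K) (d • L) = Q K L := by
    simp only [map_smul, LinearMap.smul_apply, smul_eq_mul]
    rw [← mul_assoc]
    rw [show d * c = 1 by rw [mul_comm]; exact hcd, one_mul]
  have hfs : finner (c • K) (d • L) = finner K L := by
    rw [finner_smul_smul, hcd, one_mul]
  have hKK : finner (c • K) (c • K) = a * b := by
    rw [finner_smul_smul, ← sq, hc2, ← frob_sq, ← ha']
    rw [div_mul_eq_mul_div, mul_div_assoc, sq, mul_div_assoc, div_self ha0, mul_one, mul_comm]
  have hLL : finner (d • L) (d • L) = a * b := by
    rw [finner_smul_smul, ← sq, hd2, ← frob_sq, ← hb']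
    rw [div_mul_eq_mul_div, mul_div_assoc, sq, mul_div_assoc, div_self hb0, mul_one]
  rw [hQs, hfs, hKK, hLL] at hbd
  calc |Q K L - finner K L| ≤ δ / 2 * (a * b + a * b) := hbd
    _ = δ * a * b := by ring
end

section
/- Let Q be a symmetric bilinear form on n×n real matrices satisfying (1-δ)‖K‖_F² ≤ Q(K,K) ≤ (1+δ)‖K‖_F² for all matrices K of rank at most 2r. Then for all matrices K, L of rank at most 2r, |Q(K,L) - ⟨K,L⟩| ≤ 2δ‖K‖_F‖L‖_F. -/
/-!
Split each matrix of rank at most `2r`, along an orthonormal eigenbasis of `KᵀK`, into two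
Frobenius-orthogonal pieces of rank at most `r`. On pieces of rank at most `r` the defect
`Q - ⟨·,·⟩` is a symmetric bilinear form whose quadratic form is bounded by `δ‖·‖²` on their span
(which has rank at most `2r`), so polarization bounds it by `δ‖A‖‖B‖`. Expanding `Q(K,L) - ⟨K,L⟩`
over the four pairs of pieces and using `‖K₁‖ + ‖K₂‖ ≤ √2 ‖K₁ + K₂‖` gives the factor `2`.
-/

open Finset RealInnerProductSpace

section InnerProductSpace
variable {E : Type*} [NormedAddCommGroup E] [InnerProductSpace ℝ E]

theorem abs_apply_le_of_abs_apply_self_le {B : E →ₗ[ℝ] E →ₗ[ℝ] ℝ} (hB : ∀ x y, B x y = B y x)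
    {δ : ℝ} {x y : E}
    (h : ∀ s t : ℝ, |B (s • x + t • y) (s • x + t • y)| ≤ δ * ‖s • x + t • y‖ ^ 2) :
    |B x y| ≤ δ * ‖x‖ * ‖y‖ := by
  rcases eq_or_ne x 0 with rfl | hx
  · simp
  rcases eq_or_ne y 0 with rfl | hy
  · simp
  -- Polarizing with `‖y‖ x ± ‖x‖ y` rather than with unit vectors avoids dividing by the norms.
  have hpolar : B (‖y‖ • x + ‖x‖ • y) (‖y‖ • x + ‖x‖ • y)
      - B (‖y‖ • x + (-‖x‖) • y) (‖y‖ • x + (-‖x‖) • y) = 4 * (‖x‖ * ‖y‖) * B x y := by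
    simp only [map_add, map_smul, LinearMap.add_apply, LinearMap.smul_apply, smul_eq_mul, hB y x]
    ring
  have hpar : ‖‖y‖ • x + ‖x‖ • y‖ ^ 2 + ‖‖y‖ • x + (-‖x‖) • y‖ ^ 2
      = 4 * (‖x‖ * ‖y‖) * (‖x‖ * ‖y‖) := by
    rw [neg_smul, ← sub_eq_add_neg, parallelogram_law_with_norm ℝ, norm_smul, norm_smul,
      Real.norm_of_nonneg (norm_nonneg _), Real.norm_of_nonneg (norm_nonneg _)]
    ring
  have key : 4 * (‖x‖ * ‖y‖) * |B x y| ≤ 4 * (‖x‖ * ‖y‖) * (δ * ‖x‖ * ‖y‖) := by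
    calc 4 * (‖x‖ * ‖y‖) * |B x y| = |4 * (‖x‖ * ‖y‖) * B x y| := by
          rw [abs_mul, abs_of_pos (by positivity : (0 : ℝ) < 4 * (‖x‖ * ‖y‖))]
      _ ≤ δ * (‖‖y‖ • x + ‖x‖ • y‖ ^ 2 + ‖‖y‖ • x + (-‖x‖) • y‖ ^ 2) := by
          rw [← hpolar, mul_add]
          exact (abs_sub _ _).trans (add_le_add (h _ _) (h _ _))
      _ = 4 * (‖x‖ * ‖y‖) * (δ * ‖x‖ * ‖y‖) := by rw [hpar]; ring
  exact le_of_mul_le_mul_left key (by positivity)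

theorem norm_add_norm_le_sqrt_two_mul_norm_add {x y : E} (h : ⟪x, y⟫ = 0) :
    ‖x‖ + ‖y‖ ≤ √2 * ‖x + y‖ := by
  have hpyth : ‖x + y‖ ^ 2 = ‖x‖ ^ 2 + ‖y‖ ^ 2 := by
    rw [sq, sq, sq, norm_add_sq_eq_norm_sq_add_norm_sq_real h]
  rw [← Real.sqrt_sq (norm_nonneg (x + y)), ← Real.sqrt_mul zero_le_two, hpyth]
  exact Real.le_sqrt_of_sq_le (by nlinarith [sq_nonneg (‖x‖ - ‖y‖)])

theorem abs_apply_add_add_le {B : E →ₗ[ℝ] E →ₗ[ℝ] ℝ} {S : Set E} {δ : ℝ} (hδ : 0 ≤ δ)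
    (hS : ∀ x ∈ S, ∀ y ∈ S, |B x y| ≤ δ * ‖x‖ * ‖y‖) {x₁ x₂ y₁ y₂ : E}
    (hx₁ : x₁ ∈ S) (hx₂ : x₂ ∈ S) (hy₁ : y₁ ∈ S) (hy₂ : y₂ ∈ S)
    (hx : ⟪x₁, x₂⟫ = 0) (hy : ⟪y₁, y₂⟫ = 0) :
    |B (x₁ + x₂) (y₁ + y₂)| ≤ 2 * δ * ‖x₁ + x₂‖ * ‖y₁ + y₂‖ := by
  have hsum : |B (x₁ + x₂) (y₁ + y₂)| ≤ δ * (‖x₁‖ + ‖x₂‖) * (‖y₁‖ + ‖y₂‖) := by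
    simp only [map_add, LinearMap.add_apply]
    calc _ ≤ |B x₁ y₁| + |B x₂ y₁| + (|B x₁ y₂| + |B x₂ y₂|) :=
          (abs_add_le _ _).trans (add_le_add (abs_add_le _ _) (abs_add_le _ _))
      _ ≤ _ := by linarith [hS _ hx₁ _ hy₁, hS _ hx₁ _ hy₂, hS _ hx₂ _ hy₁, hS _ hx₂ _ hy₂]
  calc _ ≤ δ * (√2 * ‖x₁ + x₂‖) * (√2 * ‖y₁ + y₂‖) := by
        refine hsum.trans ?_
        gcongr
        exacts [norm_add_norm_le_sqrt_two_mul_norm_add hx,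
          norm_add_norm_le_sqrt_two_mul_norm_add hy]
    _ = 2 * δ * ‖x₁ + x₂‖ * ‖y₁ + y₂‖ := by
        rw [show δ * (√2 * ‖x₁ + x₂‖) * (√2 * ‖y₁ + y₂‖) = δ * (√2 * √2) * ‖x₁ + x₂‖ * ‖y₁ + y₂‖
          by ring, Real.mul_self_sqrt zero_le_two]
        ring

end InnerProductSpace

namespace Matrix

variable {R : Type*} [Field R] {m n : Type*} [Fintype n]

theorem rank_add_le (A B : Matrix m n R) : (A + B).rank ≤ A.rank + B.rank := by
  rw [rank, rank, rank, mulVecLin_add]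
  refine (Submodule.finrank_mono ?_).trans (Submodule.finrank_add_le_finrank_add_finrank _ _)
  rintro _ ⟨v, rfl⟩
  exact Submodule.add_mem_sup (LinearMap.mem_range_self _ v) (LinearMap.mem_range_self _ v)

theorem rank_sum_vecMulVec_le {ι : Type*} (s : Finset ι) (u : ι → m → R) (v : ι → n → R) :
    (∑ i ∈ s, vecMulVec (u i) (v i)).rank ≤ #s := by
  refine (le_sum_of_subadditive (fun A : Matrix m n R => A.rank) rank_zero.le rank_add_le s
    _).trans ?_
  simpa using sum_le_sum fun i _ => rank_vecMulVec_le (u i) (v i)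

variable [Fintype m]

theorem rank_smul_le [DecidableEq m] (c : R) (A : Matrix m n R) :
    (c • A).rank ≤ A.rank := by
  have : c • A = (c • (1 : Matrix m m R)) * A := by rw [smul_mul, Matrix.one_mul]
  exact this ▸ rank_mul_le_right _ _

abbrev frobeniusInnerCore : InnerProductSpace.Core ℝ (Matrix m n ℝ) where
  inner := finner
  conj_inner_symm A B := by simp [finner, mul_comm]
  re_inner_nonneg A := sum_nonneg fun i _ => sum_nonneg fun j _ => mul_self_nonneg (A i j)
  add_left A B C := by simp [finner, add_mul, sum_add_distrib]
  smul_left A B c := by simp [finner, mul_sum, mul_assoc]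
  definite A h := by
    have hrow (i : m) : ∑ j, A i j * A i j = 0 :=
      (sum_eq_zero_iff_of_nonneg fun i _ => sum_nonneg fun j _ => mul_self_nonneg (A i j)).mp h i
        (mem_univ i)
    ext i j
    exact mul_self_eq_zero.mp <|
      (sum_eq_zero_iff_of_nonneg fun j _ => mul_self_nonneg (A i j)).mp (hrow i) j (mem_univ j)

end Matrix

-- Matrices carry no global norm; the Frobenius inner product `finner` is installed locally, so
-- that `frob` becomes its norm.
noncomputable local instance {m n : Type*} [Fintype m] [Fintype n] :
    NormedAddCommGroup (Matrix m n ℝ) :=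
  Matrix.frobeniusInnerCore.toNormedAddCommGroup

noncomputable local instance {m n : Type*} [Fintype m] [Fintype n] :
    InnerProductSpace ℝ (Matrix m n ℝ) :=
  InnerProductSpace.ofCore Matrix.frobeniusInnerCore.toCore

section Frobenius
variable {m n : Type*} [Fintype m] [Fintype n]

theorem finner_eq_inner (A B : Matrix m n ℝ) : finner A B = ⟪A, B⟫ := rfl

theorem frob_eq_norm (A : Matrix m n ℝ) : frob A = ‖A‖ := by
  rw [frob, norm_eq_sqrt_real_inner, ← finner_eq_inner, finner]
  simp only [sq]

end Frobenius

namespace Matrix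

variable {m n : Type*} [Fintype n]

theorem eq_sum_vecMulVec_mulVec {ι : Type*} [Fintype ι] (K : Matrix m n ℝ)
    (b : OrthonormalBasis ι ℝ (EuclideanSpace ℝ n)) :
    K = ∑ i, vecMulVec (K *ᵥ ⇑(b i)) ⇑(b i) := by
  ext a c
  have hrow := congrArg (· c) (b.sum_repr' (WithLp.toLp 2 (K a)))
  simp only [WithLp.ofLp_sum, WithLp.ofLp_smul, EuclideanSpace.inner_eq_star_dotProduct,
    star_trivial] at hrow
  simpa [sum_apply, vecMulVec_apply, mulVec, dotProduct_comm (K a)] using hrow.symm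

variable [Fintype m]

theorem inner_vecMulVec_vecMulVec (a c : m → ℝ) (u w : n → ℝ) :
    ⟪vecMulVec a u, vecMulVec c w⟫ = (a ⬝ᵥ c) * (u ⬝ᵥ w) := by
  simp only [← finner_eq_inner, finner, vecMulVec_apply, dotProduct, sum_mul_sum]
  exact sum_congr rfl fun i _ => sum_congr rfl fun j _ => by ring

theorem mulVec_dotProduct_mulVec (K : Matrix m n ℝ) (v w : n → ℝ) :
    (K *ᵥ v) ⬝ᵥ (K *ᵥ w) = v ⬝ᵥ ((Kᵀ * K) *ᵥ w) := by
  rw [← mulVec_mulVec, dotProduct_mulVec v Kᵀ, vecMul_transpose]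

theorem exists_orthonormalBasis_card_mulVec_ne_zero_le_rank [DecidableEq n]
    (K : Matrix m n ℝ) :
    ∃ b : OrthonormalBasis n ℝ (EuclideanSpace ℝ n), #{i | K *ᵥ ⇑(b i) ≠ 0} ≤ K.rank := by
  have hM : (Kᵀ * K).IsHermitian := by simpa using isHermitian_conjTranspose_mul_self K
  refine ⟨hM.eigenvectorBasis, ?_⟩
  have hker (i : n) (hi : hM.eigenvalues i = 0) : K *ᵥ ⇑(hM.eigenvectorBasis i) = 0 := by
    rw [← dotProduct_self_eq_zero, mulVec_dotProduct_mulVec, hM.mulVec_eigenvectorBasis, hi,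
      zero_smul, dotProduct_zero]
  calc _ ≤ #{i | hM.eigenvalues i ≠ 0} :=
        card_le_card <| monotone_filter_right _ fun i _ => mt (hker i)
    _ = K.rank := by
      rw [← rank_transpose_mul_self, hM.rank_eq_card_non_zero_eigs, Fintype.card_subtype]

theorem exists_add_eq_rank_le_rank_le_inner_eq_zero (K : Matrix m n ℝ) {a c : ℕ}
    (hK : K.rank ≤ a + c) :
    ∃ K₁ K₂ : Matrix m n ℝ, K₁ + K₂ = K ∧ K₁.rank ≤ a ∧ K₂.rank ≤ c ∧ ⟪K₁, K₂⟫ = 0 := by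
  classical
  obtain ⟨b, hb⟩ := exists_orthonormalBasis_card_mulVec_ne_zero_le_rank K
  set N : Finset n := {i | K *ᵥ ⇑(b i) ≠ 0}
  set term : n → Matrix m n ℝ := fun i => vecMulVec (K *ᵥ ⇑(b i)) ⇑(b i)
  obtain ⟨S, hSN, hS⟩ := exists_subset_card_eq (min_le_right a #N)
  refine ⟨∑ i ∈ S, term i, ∑ i ∈ N \ S, term i, ?_, ?_, ?_, ?_⟩
  · rw [add_comm, sum_sdiff hSN, eq_sum_vecMulVec_mulVec K b]
    refine sum_subset (subset_univ N) fun i _ hi => ?_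
    have hKi : K *ᵥ ⇑(b i) = 0 := by simpa [N] using hi
    simp [term, hKi]
  · exact (rank_sum_vecMulVec_le _ _ _).trans (hS ▸ min_le_left _ _)
  · refine (rank_sum_vecMulVec_le _ _ _).trans ?_
    rw [card_sdiff_of_subset hSN]
    omega
  · rw [sum_inner]
    refine sum_eq_zero fun i hi => ?_
    rw [inner_sum]
    refine sum_eq_zero fun j hj => ?_
    have hij : i ≠ j := by rintro rfl; exact (mem_sdiff.mp hj).2 hi
    have horth : ⇑(b i) ⬝ᵥ ⇑(b j) = 0 := by
      simpa [EuclideanSpace.inner_eq_star_dotProduct] using b.orthonormal.2 hij.symm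
    rw [inner_vecMulVec_vecMulVec, horth, mul_zero]

end Matrix

theorem stmt_1_general {n r : ℕ} (δ : ℝ) (hδ0 : 0 ≤ δ)
    (Q : Matrix (Fin n) (Fin n) ℝ →ₗ[ℝ] Matrix (Fin n) (Fin n) ℝ →ₗ[ℝ] ℝ)
    (hsym : ∀ K L, Q K L = Q L K)
    (hRIP : ∀ K : Matrix (Fin n) (Fin n) ℝ, K.rank ≤ 2 * r →
      (1 - δ) * frob K ^ 2 ≤ Q K K ∧ Q K K ≤ (1 + δ) * frob K ^ 2)
    (K L : Matrix (Fin n) (Fin n) ℝ) (hK : K.rank ≤ 2 * r) (hL : L.rank ≤ 2 * r) :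
    |Q K L - finner K L| ≤ 2 * δ * frob K * frob L := by
  simp only [frob_eq_norm, finner_eq_inner] at hRIP ⊢
  set S : Set (Matrix (Fin n) (Fin n) ℝ) := {A | A.rank ≤ r}
  set B := Q - innerₗ (Matrix (Fin n) (Fin n) ℝ) with hB
  have hS : ∀ A ∈ S, ∀ A' ∈ S, |B A A'| ≤ δ * ‖A‖ * ‖A'‖ := by
    intro A hA A' hA'
    refine abs_apply_le_of_abs_apply_self_le (fun x y => by simp [hB, hsym x y, real_inner_comm])
      fun s t => ?_
    have hrank : (s • A + t • A').rank ≤ 2 * r :=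
      (Matrix.rank_add_le _ _).trans <| two_mul r ▸ add_le_add
        ((Matrix.rank_smul_le s A).trans hA) ((Matrix.rank_smul_le t A').trans hA')
    obtain ⟨hlo, hhi⟩ := hRIP _ hrank
    rw [hB, LinearMap.sub_apply, LinearMap.sub_apply, innerₗ_apply_apply,
      real_inner_self_eq_norm_sq, abs_le]
    constructor <;> linarith
  obtain ⟨K₁, K₂, rfl, hK₁, hK₂, hK₁₂⟩ :=
    K.exists_add_eq_rank_le_rank_le_inner_eq_zero (hK.trans_eq (two_mul r))
  obtain ⟨L₁, L₂, rfl, hL₁, hL₂, hL₁₂⟩ :=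
    L.exists_add_eq_rank_le_rank_le_inner_eq_zero (hL.trans_eq (two_mul r))
  simpa only [hB, LinearMap.sub_apply, innerₗ_apply_apply] using
    abs_apply_add_add_le hδ0 hS hK₁ hK₂ hL₁ hL₂ hK₁₂ hL₁₂

theorem stmt_1 {n r : ℕ} (δ : ℝ) (hδ0 : 0 ≤ δ) (hδ1 : δ < 1)
    (Q : Matrix (Fin n) (Fin n) ℝ →ₗ[ℝ] Matrix (Fin n) (Fin n) ℝ →ₗ[ℝ] ℝ)
    (hsym : ∀ K L, Q K L = Q L K)
    (hRIP : ∀ K : Matrix (Fin n) (Fin n) ℝ, K.rank ≤ 2 * r →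
      (1 - δ) * frob K ^ 2 ≤ Q K K ∧ Q K K ≤ (1 + δ) * frob K ^ 2)
    (K L : Matrix (Fin n) (Fin n) ℝ) (hK : K.rank ≤ 2 * r) (hL : L.rank ≤ 2 * r) :
    |Q K L - finner K L| ≤ 2 * δ * frob K * frob L :=
  stmt_1_general δ hδ0 Q hsym hRIP K L hK hL
end

section
/- Let n ≥ 4, r ≥ 1, and let A₁ = (1/√n)·diag(a₁,…,aₙ) with each aᵢ ∈ {-1,1}. For every matrix M ∈ ℝ^{n×n} with rank(M) ≤ 2r, it holds that |⟨A₁, M⟩| ≤ √(2r/n)·‖M‖_F. -/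
open Matrix

/-!
Let `P` be the orthogonal projection onto the column space of `M` and `eᵢ` the standard basis.
Since every column `M eᵢ` lies in the range of `P`, `∑ aᵢ Mᵢᵢ = ∑ aᵢ ⟪P eᵢ, M eᵢ⟫`, and
Cauchy–Schwarz bounds this by `(∑ ‖P eᵢ‖²)^{1/2} ‖M‖_F`, where `∑ ‖P eᵢ‖² = tr P = rank M`.
-/

open Module
open scoped InnerProductSpace

namespace Submodule

variable {𝕜 E ι : Type*} [RCLike 𝕜] [NormedAddCommGroup E] [InnerProductSpace 𝕜 E]
  [FiniteDimensional 𝕜 E] [Fintype ι]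

theorem trace_starProjection (K : Submodule 𝕜 E) :
    LinearMap.trace 𝕜 E K.starProjection = finrank 𝕜 K := by
  have hP : (K.starProjection : E →ₗ[𝕜] E) =
      K.subtype ∘ₗ (K.orthogonalProjectionOnto : E →ₗ[𝕜] K) := rfl
  have hid : (K.orthogonalProjectionOnto : E →ₗ[𝕜] K) ∘ₗ K.subtype = LinearMap.id := by
    ext v; simp
  rw [hP, LinearMap.trace_comp_comm', hid, LinearMap.trace_id]

theorem sum_norm_sq_starProjection (K : Submodule 𝕜 E) (e : OrthonormalBasis ι 𝕜 E) :
    ∑ i, ‖K.starProjection (e i)‖ ^ 2 = finrank 𝕜 K := by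
  have h := congrArg RCLike.re (LinearMap.trace_eq_sum_inner (K.starProjection : E →ₗ[𝕜] E) e)
  rw [trace_starProjection, RCLike.natCast_re, map_sum] at h
  rw [h]
  refine Finset.sum_congr rfl fun i _ => ?_
  rw [ContinuousLinearMap.coe_coe, ← inner_re_symm, re_inner_starProjection_eq_normSq]
  rfl

theorem norm_sum_mul_inner_le (K : Submodule 𝕜 E) (e : OrthonormalBasis ι 𝕜 E) {d : ι → 𝕜}
    (hd : ∀ i, ‖d i‖ ≤ 1) {x : ι → E} (hx : ∀ i, x i ∈ K) :
    ‖∑ i, d i * ⟪e i, x i⟫_𝕜‖ ≤ √(finrank 𝕜 K) * √(∑ i, ‖x i‖ ^ 2) := by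
  have hproj : ∀ i, ⟪e i, x i⟫_𝕜 = ⟪K.starProjection (e i), x i⟫_𝕜 := fun i => by
    rw [inner_starProjection_left_eq_right, K.starProjection_eq_self_iff.mpr (hx i)]
  calc ‖∑ i, d i * ⟪e i, x i⟫_𝕜‖
      ≤ ∑ i, ‖K.starProjection (e i)‖ * ‖x i‖ := by
        refine (norm_sum_le _ _).trans (Finset.sum_le_sum fun i _ => ?_)
        rw [norm_mul, hproj]
        exact (mul_le_of_le_one_left (norm_nonneg _) (hd i)).trans (norm_inner_le_norm _ _)
    _ ≤ √(∑ i, ‖K.starProjection (e i)‖ ^ 2) * √(∑ i, ‖x i‖ ^ 2) :=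
        Real.sum_mul_le_sqrt_mul_sqrt _ _ _
    _ = √(finrank 𝕜 K) * √(∑ i, ‖x i‖ ^ 2) := by rw [sum_norm_sq_starProjection]

end Submodule

theorem Matrix.rank_eq_finrank_range_toEuclideanLin {𝕜 m n : Type*} [RCLike 𝕜] [Fintype m]
    [Fintype n] [DecidableEq n] (M : Matrix m n 𝕜) :
    M.rank = finrank 𝕜 (LinearMap.range (toEuclideanLin M)) := by
  rw [toEuclideanLin_eq_toLin_orthonormal]
  exact rank_eq_finrank_range_toLin M (EuclideanSpace.basisFun m 𝕜).toBasis
    (EuclideanSpace.basisFun n 𝕜).toBasis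

theorem abs_sum_mul_diag_le_sqrt_rank_mul_frob {ι : Type*} [Fintype ι] [DecidableEq ι]
    {d : ι → ℝ} (hd : ∀ i, |d i| ≤ 1) (M : Matrix ι ι ℝ) :
    |∑ i, d i * M i i| ≤ √M.rank * frob M := by
  let col : ι → EuclideanSpace ℝ ι := fun i => toEuclideanLin M (EuclideanSpace.basisFun ι ℝ i)
  have hcol : ∀ i j, col i j = M j i := fun i j => by simp [col]
  have h := (LinearMap.range (toEuclideanLin M)).norm_sum_mul_inner_le
    (EuclideanSpace.basisFun ι ℝ) hd (x := col) fun i => LinearMap.mem_range_self _ _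
  have hdiag : ∀ i, ⟪EuclideanSpace.basisFun ι ℝ i, col i⟫_ℝ = M i i := fun i => by
    simp [EuclideanSpace.inner_single_left, hcol]
  have hfrob : ∑ i, ‖col i‖ ^ 2 = ∑ i, ∑ j, M i j ^ 2 := by
    simp_rw [EuclideanSpace.real_norm_sq_eq, hcol]
    exact Finset.sum_comm
  simpa only [frob, hdiag, hfrob, Real.norm_eq_abs, ← rank_eq_finrank_range_toEuclideanLin] using h

theorem finner_smul_diagonal {ι : Type*} [Fintype ι] [DecidableEq ι] (c : ℝ) (d : ι → ℝ)
    (M : Matrix ι ι ℝ) : finner (c • diagonal d) M = c * ∑ i, d i * M i i := by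
  simp only [finner, Matrix.smul_apply, diagonal_apply, smul_eq_mul, mul_ite, mul_zero, ite_mul,
    zero_mul, Finset.sum_ite_eq, Finset.mem_univ, if_true, Finset.mul_sum, mul_assoc]

theorem stmt_7_general {n : ℕ} (r : ℕ)
    (a : Fin n → ℝ) (ha : ∀ i, a i = 1 ∨ a i = -1)
    (A₁ : Matrix (Fin n) (Fin n) ℝ)
    (hA₁ : A₁ = (1 / Real.sqrt n) • Matrix.diagonal a)
    (M : Matrix (Fin n) (Fin n) ℝ) (hM : M.rank ≤ 2 * r) :
    |finner A₁ M| ≤ Real.sqrt (2 * r / n) * frob M := by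
  have ha_abs : ∀ i, |a i| ≤ 1 := fun i => by rcases ha i with h | h <;> simp [h]
  have hrank : √(M.rank : ℝ) ≤ √(2 * r) := Real.sqrt_le_sqrt (by exact_mod_cast hM)
  rw [hA₁, finner_smul_diagonal, abs_mul, abs_of_nonneg (by positivity),
    Real.sqrt_div (by positivity)]
  calc 1 / √n * |∑ i, a i * M i i| ≤ 1 / √n * (√M.rank * frob M) := by
        gcongr; exact abs_sum_mul_diag_le_sqrt_rank_mul_frob ha_abs M
    _ ≤ √(2 * r) / √n * frob M := by
        rw [← mul_assoc, one_div_mul_eq_div]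
        gcongr
        exact Real.sqrt_nonneg _

theorem stmt_7 {n : ℕ} (hn : 4 ≤ n) (r : ℕ) (hr : 1 ≤ r)
    (a : Fin n → ℝ) (ha : ∀ i, a i = 1 ∨ a i = -1)
    (A₁ : Matrix (Fin n) (Fin n) ℝ)
    (hA₁ : A₁ = (1 / Real.sqrt n) • Matrix.diagonal a)
    (M : Matrix (Fin n) (Fin n) ℝ) (hM : M.rank ≤ 2 * r) :
    |finner A₁ M| ≤ Real.sqrt (2 * r / n) * frob M :=
  stmt_7_general r a ha A₁ hA₁ M hM
end

section
/- Define H: ℝ → ℝ by H(t) = 0 for t ≤ 0 and H(t) = exp(-1/t^γ) for t > 0, where γ ∈ (0,1). Then H is twice continuously differentiable, H'(0) = H''(0) = 0, and for all t ∈ ℝ: |t·H'(t)| ≤ γ/e and |t²·H''(t)| ≤ 4γ/e. -/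
/-!
For `t > 0` put `u = t ^ (-γ)`, so that `H t = exp (-u)`. Each derivative of `H` on `(0, ∞)` is a
combination of terms `t ^ c * exp (-t ^ (-γ))`, and these tend to `0` as `t → 0⁺` because the
exponential beats every power of `u`; hence `H`, `H'`, `H''` extend continuously by `0` and the
derivative extension theorem makes `H` of class `C²` with `H'(0) = H''(0) = 0`. In terms of `u`,
`t H'(t) = γ u e⁻ᵘ` and `t² H''(t) = γ² u² e⁻ᵘ - γ (γ + 1) u e⁻ᵘ`, and the bounds follow from
`u e⁻ᵘ ≤ e⁻¹` and `u² e⁻ᵘ ≤ 4 e⁻²`.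
-/

open Real Filter Set Topology

theorem continuousAt_indicator_Ioi_zero {E : Type*} [TopologicalSpace E] [Zero E] {f : ℝ → E}
    (hf : Tendsto f (𝓝[>] 0) (𝓝 0)) :
    ContinuousAt ((Ioi 0).indicator f) 0 := by
  have hleft : Tendsto ((Ioi 0).indicator f) (𝓝[≤] 0) (𝓝 0) :=
    tendsto_const_nhds.congr' <| eventually_nhdsWithin_of_forall fun t ht =>
      (indicator_of_notMem (not_lt.2 ht) f).symm
  have hright : Tendsto ((Ioi 0).indicator f) (𝓝[>] 0) (𝓝 0) :=
    hf.congr' <| eventually_nhdsWithin_of_forall fun t ht => (indicator_of_mem ht f).symm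
  rw [ContinuousAt, indicator_of_notMem (notMem_Ioi.2 le_rfl), ← nhdsLE_sup_nhdsGT]
  exact hleft.sup hright

theorem continuous_indicator_Ioi {E : Type*} [TopologicalSpace E] [Zero E] {f : ℝ → E}
    (hf : ContinuousOn f (Ioi 0)) (hf0 : Tendsto f (𝓝[>] 0) (𝓝 0)) :
    Continuous ((Ioi 0).indicator f) := by
  refine continuous_iff_continuousAt.2 fun t => ?_
  rcases eq_or_ne t 0 with rfl | ht
  · exact continuousAt_indicator_Ioi_zero hf0
  · exact (interior_Ioi (a := (0 : ℝ)) ▸ hf).continuousAt_indicator (by simpa using ht)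

theorem hasDerivAt_indicator_Ioi {E : Type*} [NormedAddCommGroup E] [NormedSpace ℝ E]
    {f f' : ℝ → E} (hf : ∀ t ∈ Ioi 0, HasDerivAt f (f' t) t)
    (hf0 : Tendsto f (𝓝[>] 0) (𝓝 0)) (hf'0 : Tendsto f' (𝓝[>] 0) (𝓝 0)) (t : ℝ) :
    HasDerivAt ((Ioi 0).indicator f) ((Ioi 0).indicator f' t) t := by
  refine hasDerivAt_of_hasDerivAt_of_ne' (fun s hs => ?_)
    (continuousAt_indicator_Ioi_zero hf0) (continuousAt_indicator_Ioi_zero hf'0) t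
  rcases hs.lt_or_gt with hs | hs
  · rw [indicator_of_notMem (notMem_Ioi.2 hs.le)]
    exact (hasDerivAt_const s 0).congr_of_eventuallyEq <|
      eqOn_indicator'.eventuallyEq_of_mem (by simpa using Iic_mem_nhds hs)
  · rw [indicator_of_mem (mem_Ioi.2 hs)]
    exact (hf s hs).congr_of_eventuallyEq <| eqOn_indicator.eventuallyEq_of_mem (Ioi_mem_nhds hs)

theorem contDiff_two_of_hasDerivAt {E : Type*} [NormedAddCommGroup E] [NormedSpace ℝ E]
    {f f' f'' : ℝ → E} (hf : ∀ t, HasDerivAt f (f' t) t) (hf' : ∀ t, HasDerivAt f' (f'' t) t)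
    (hf'' : Continuous f'') : ContDiff ℝ 2 f := by
  have hderiv : deriv f = f' := funext fun t => (hf t).deriv
  have hderiv' : deriv f' = f'' := funext fun t => (hf' t).deriv
  rw [show (2 : WithTop ℕ∞) = 1 + 1 from rfl, contDiff_succ_iff_deriv, hderiv,
    contDiff_one_iff_deriv, hderiv']
  exact ⟨fun t => (hf t).differentiableAt, by simp, fun t => (hf' t).differentiableAt, hf''⟩

theorem sq_mul_exp_neg_le {u : ℝ} (hu : 0 ≤ u) : u ^ 2 * exp (-u) ≤ 4 * exp (-1) ^ 2 := by
  have h0 : 0 ≤ u / 2 * exp (-(u / 2)) := by positivity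
  calc u ^ 2 * exp (-u) = 4 * (u / 2 * exp (-(u / 2))) ^ 2 := by
        rw [mul_pow, ← exp_nat_mul]; ring_nf
    _ ≤ 4 * exp (-1) ^ 2 := by gcongr; exact mul_exp_neg_le_exp_neg_one _

theorem tendsto_rpow_mul_exp_neg_rpow_neg {γ : ℝ} (hγ : 0 < γ) (c : ℝ) :
    Tendsto (fun t : ℝ => t ^ c * exp (-t ^ (-γ))) (𝓝[>] 0) (𝓝 0) := by
  have hu : Tendsto (fun t : ℝ => t ^ (-γ)) (𝓝[>] 0) atTop :=
    tendsto_rpow_neg_nhdsGT_zero (neg_lt_zero.2 hγ)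
  refine ((tendsto_rpow_mul_exp_neg_mul_atTop_nhds_zero (-c / γ) 1 one_pos).comp hu).congr' ?_
  filter_upwards [self_mem_nhdsWithin] with t (ht : 0 < t)
  rw [Function.comp_apply, ← rpow_mul ht.le, neg_one_mul]
  congr 2
  field_simp

noncomputable def expNegRpow (γ t : ℝ) : ℝ := exp (-t ^ (-γ))

noncomputable def expNegRpowDeriv (γ t : ℝ) : ℝ := γ * (t ^ (-γ - 1) * expNegRpow γ t)

noncomputable def expNegRpowDeriv2 (γ t : ℝ) : ℝ :=
  γ ^ 2 * (t ^ (-2 * γ - 2) * expNegRpow γ t) - γ * (γ + 1) * (t ^ (-γ - 2) * expNegRpow γ t)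

section ExpNegRpow

variable {γ t : ℝ}

theorem hasDerivAt_expNegRpow (ht : 0 < t) :
    HasDerivAt (expNegRpow γ) (expNegRpowDeriv γ t) t := by
  have h : HasDerivAt (expNegRpow γ) (exp (-t ^ (-γ)) * -(-γ * t ^ (-γ - 1))) t :=
    (hasDerivAt_rpow_const (Or.inl ht.ne')).neg.exp
  exact h.congr_deriv (by rw [expNegRpowDeriv, expNegRpow]; ring)

theorem hasDerivAt_expNegRpowDeriv (ht : 0 < t) :
    HasDerivAt (expNegRpowDeriv γ) (expNegRpowDeriv2 γ t) t := by
  have h : HasDerivAt (expNegRpowDeriv γ) (γ * ((-γ - 1) * t ^ (-γ - 1 - 1) * expNegRpow γ t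
      + t ^ (-γ - 1) * expNegRpowDeriv γ t)) t :=
    ((hasDerivAt_rpow_const (Or.inl ht.ne')).mul (hasDerivAt_expNegRpow ht)).const_mul γ
  refine h.congr_deriv ?_
  rw [expNegRpowDeriv2, expNegRpowDeriv, show -2 * γ - 2 = (-γ - 1) + (-γ - 1) by ring, rpow_add ht,
    show -γ - 2 = -γ - 1 - 1 by ring]
  ring

theorem continuousOn_expNegRpowDeriv2 : ContinuousOn (expNegRpowDeriv2 γ) (Ioi 0) := by
  intro t ht
  have : ∀ c : ℝ, ContinuousAt (fun s : ℝ => s ^ c) t :=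
    fun c => continuousAt_rpow_const t c (Or.inl (ne_of_gt ht))
  unfold expNegRpowDeriv2 expNegRpow
  fun_prop

theorem tendsto_expNegRpow (hγ : 0 < γ) : Tendsto (expNegRpow γ) (𝓝[>] 0) (𝓝 0) := by
  refine (tendsto_rpow_mul_exp_neg_rpow_neg hγ 0).congr fun t => ?_
  rw [rpow_zero, one_mul, expNegRpow]

theorem tendsto_expNegRpowDeriv (hγ : 0 < γ) : Tendsto (expNegRpowDeriv γ) (𝓝[>] 0) (𝓝 0) := by
  have h := (tendsto_rpow_mul_exp_neg_rpow_neg hγ (-γ - 1)).const_mul γ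
  rw [mul_zero] at h
  exact h

theorem tendsto_expNegRpowDeriv2 (hγ : 0 < γ) :
    Tendsto (expNegRpowDeriv2 γ) (𝓝[>] 0) (𝓝 0) := by
  have h := ((tendsto_rpow_mul_exp_neg_rpow_neg hγ (-2 * γ - 2)).const_mul (γ ^ 2)).sub
    ((tendsto_rpow_mul_exp_neg_rpow_neg hγ (-γ - 2)).const_mul (γ * (γ + 1)))
  rw [mul_zero, mul_zero, sub_zero] at h
  exact h

theorem mul_expNegRpowDeriv (ht : 0 < t) :
    t * expNegRpowDeriv γ t = γ * (t ^ (-γ) * exp (-t ^ (-γ))) := by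
  rw [expNegRpowDeriv, expNegRpow, rpow_sub_one ht.ne']
  field_simp

theorem sq_mul_expNegRpowDeriv2 (ht : 0 < t) :
    t ^ 2 * expNegRpowDeriv2 γ t =
      γ ^ 2 * ((t ^ (-γ)) ^ 2 * exp (-t ^ (-γ))) - γ * (γ + 1) * (t ^ (-γ) * exp (-t ^ (-γ))) := by
  rw [expNegRpowDeriv2, expNegRpow, show -2 * γ - 2 = (-γ - 1) + (-γ - 1) by ring, rpow_add ht,
    show -γ - 2 = -γ - 1 - 1 by ring]
  simp only [rpow_sub_one ht.ne']
  field_simp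

theorem abs_mul_indicator_expNegRpowDeriv_le (hγ : 0 ≤ γ) (t : ℝ) :
    |t * (Ioi 0).indicator (expNegRpowDeriv γ) t| ≤ γ / exp 1 := by
  rcases le_or_gt t 0 with ht | ht
  · rw [indicator_of_notMem (notMem_Ioi.2 ht), mul_zero, abs_zero]
    positivity
  rw [indicator_of_mem (mem_Ioi.2 ht), mul_expNegRpowDeriv ht, div_eq_mul_inv, ← exp_neg,
    abs_of_nonneg (by positivity)]
  exact mul_le_mul_of_nonneg_left (mul_exp_neg_le_exp_neg_one _) hγ

theorem abs_sq_mul_indicator_expNegRpowDeriv2_le (hγ0 : 0 ≤ γ) (hγ1 : γ ≤ 1) (t : ℝ) :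
    |t ^ 2 * (Ioi 0).indicator (expNegRpowDeriv2 γ) t| ≤ 4 * γ / exp 1 := by
  rcases le_or_gt t 0 with ht | ht
  · rw [indicator_of_notMem (notMem_Ioi.2 ht), mul_zero, abs_zero]
    positivity
  rw [indicator_of_mem (mem_Ioi.2 ht), sq_mul_expNegRpowDeriv2 ht, div_eq_mul_inv, ← exp_neg]
  set u := t ^ (-γ)
  set v := exp (-1)
  have hu : 0 ≤ u := by positivity
  have hv : 0 ≤ v := by positivity
  have hv1 : v ≤ 1 := exp_le_one_iff.2 (by norm_num)
  have hA : γ ^ 2 * (u ^ 2 * exp (-u)) ≤ 4 * γ * v :=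
    calc γ ^ 2 * (u ^ 2 * exp (-u)) ≤ γ ^ 2 * (4 * v ^ 2) :=
          mul_le_mul_of_nonneg_left (sq_mul_exp_neg_le hu) (sq_nonneg γ)
      _ ≤ 4 * γ * v := by nlinarith [mul_le_mul hγ1 hv1 hv zero_le_one, mul_nonneg hγ0 hv]
  have hB : γ * (γ + 1) * (u * exp (-u)) ≤ 4 * γ * v :=
    calc γ * (γ + 1) * (u * exp (-u)) ≤ γ * (γ + 1) * v :=
          mul_le_mul_of_nonneg_left (mul_exp_neg_le_exp_neg_one u) (by positivity)
      _ ≤ 4 * γ * v := by nlinarith [mul_nonneg hγ0 hv]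
  have hA0 : 0 ≤ γ ^ 2 * (u ^ 2 * exp (-u)) := by positivity
  have hB0 : 0 ≤ γ * (γ + 1) * (u * exp (-u)) := by positivity
  rw [abs_sub_le_iff]
  constructor <;> linarith

end ExpNegRpow

theorem stmt_12 (γ : ℝ) (hγ0 : 0 < γ) (hγ1 : γ < 1) (H : ℝ → ℝ)
    (hH : ∀ t : ℝ, H t = if t ≤ 0 then 0 else Real.exp (-1 / t ^ γ)) :
    ContDiff ℝ 2 H ∧ deriv H 0 = 0 ∧ deriv (deriv H) 0 = 0 ∧
      (∀ t : ℝ, |t * deriv H t| ≤ γ / Real.exp 1) ∧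
      (∀ t : ℝ, |t ^ 2 * deriv (deriv H) t| ≤ 4 * γ / Real.exp 1) := by
  have hHind : H = (Ioi 0).indicator (expNegRpow γ) := by
    ext t
    rcases le_or_gt t 0 with ht | ht
    · rw [hH, if_pos ht, indicator_of_notMem (notMem_Ioi.2 ht)]
    · rw [hH, if_neg ht.not_ge, indicator_of_mem (mem_Ioi.2 ht), expNegRpow, rpow_neg ht.le,
        neg_div, one_div]
  have hH' : ∀ t, HasDerivAt H ((Ioi 0).indicator (expNegRpowDeriv γ) t) t :=
    hHind ▸ hasDerivAt_indicator_Ioi (fun t => hasDerivAt_expNegRpow) (tendsto_expNegRpow hγ0)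
      (tendsto_expNegRpowDeriv hγ0)
  have hH'' : ∀ t, HasDerivAt ((Ioi 0).indicator (expNegRpowDeriv γ))
      ((Ioi 0).indicator (expNegRpowDeriv2 γ) t) t :=
    hasDerivAt_indicator_Ioi (fun t => hasDerivAt_expNegRpowDeriv) (tendsto_expNegRpowDeriv hγ0)
      (tendsto_expNegRpowDeriv2 hγ0)
  have hderiv : deriv H = (Ioi 0).indicator (expNegRpowDeriv γ) := funext fun t => (hH' t).deriv
  have hderiv2 : deriv (deriv H) = (Ioi 0).indicator (expNegRpowDeriv2 γ) :=
    hderiv ▸ funext fun t => (hH'' t).deriv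
  refine ⟨contDiff_two_of_hasDerivAt hH' hH''
      (continuous_indicator_Ioi continuousOn_expNegRpowDeriv2 (tendsto_expNegRpowDeriv2 hγ0)),
    by simp [hderiv], by simp [hderiv2], ?_, ?_⟩
  · exact hderiv ▸ abs_mul_indicator_expNegRpowDeriv_le hγ0.le
  · exact hderiv2 ▸ abs_sq_mul_indicator_expNegRpowDeriv2_le hγ0.le hγ1.le
end
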